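/- Least-squares regression commutes with conditional expectation: let (Ω,F,P) be a probability space, Q ⊆ F a sub-σ-algebra, X₁,...,X_M random variables, and K = span{p₁,...,p_K} a finite-dimensional space of functions such that each vector (p_j(X₁),...,p_j(X_M)) is Q-measurable. If S* minimizes (1/M)Σ_m |φ(X_m) - S(X_m)|² over φ ∈ K, then E[S*|Q] (taken coefficient-wise) minimizes (1/M)Σ_m |φ(X_m) - E[S(X_m)|Q]|² over φ ∈ K, where the targets E[S(X_m)|Q] replace S(X_m). -/

import Mathlib

/-!
Writing `G j j' := ∑ m, p_j(X_m) p_j'(X_m)` for the empirical Gram matrix, the `j`-th normal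
equation reads `∑ m, p_j(X_m) S(X_m) - ∑ j', G j j' c_j' = 0`. This is linear in the targets and
the coefficients, with weights `p_j(X_m)` and `G j j'` that are `Q`-measurable, so by the pull-out
property `E[· | Q]` maps it to the same equation for the targets `E[S(X_m) | Q]` and the
coefficients `E[c_j' | Q]`.
-/

open MeasureTheory Finset

theorem sum_mul_sub_sum_mul_eq_sub_sum_gram_mul {R ι κ : Type*} [CommRing R]
    (s : Finset ι) (t : Finset κ) (a y : ι → R) (b : κ → ι → R) (x : κ → R) :
    ∑ i ∈ s, a i * (y i - ∑ k ∈ t, x k * b k i) =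
      ∑ i ∈ s, a i * y i - ∑ k ∈ t, (∑ i ∈ s, a i * b k i) * x k := by
  simp only [mul_sub, sum_sub_distrib, mul_sum, sum_mul]
  rw [sum_comm (s := s)]
  congr 1
  exact sum_congr rfl fun _ _ => sum_congr rfl fun _ _ => by ring

theorem condExp_sum_mul_of_stronglyMeasurable {Ω ι : Type*} {m m0 : MeasurableSpace Ω}
    {μ : Measure Ω} (s : Finset ι) {a f : ι → Ω → ℝ}
    (ha : ∀ i ∈ s, StronglyMeasurable[m] (a i)) (hf : ∀ i ∈ s, Integrable (f i) μ)
    (haf : ∀ i ∈ s, Integrable (fun ω => a i ω * f i ω) μ) :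
    μ[fun ω => ∑ i ∈ s, a i ω * f i ω | m] =ᵐ[μ] fun ω => ∑ i ∈ s, a i ω * μ[f i | m] ω := by
  have hpull : ∀ᵐ ω ∂μ, ∀ i ∈ s, μ[a i * f i | m] ω = a i ω * μ[f i | m] ω :=
    s.eventually_all.2 fun i hi =>
      condExp_mul_of_stronglyMeasurable_left (m := m) (ha i hi) (haf i hi) (hf i hi)
  have hsum_fun : (fun ω => ∑ i ∈ s, a i ω * f i ω) = ∑ i ∈ s, a i * f i := by
    ext ω
    simp only [Finset.sum_apply, Pi.mul_apply]
  rw [hsum_fun]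
  filter_upwards [condExp_finsetSum (f := fun i => a i * f i) haf m, hpull] with ω hsum hω
  rw [hsum, Finset.sum_apply]
  exact sum_congr rfl hω

theorem ols_commutes_with_condexp_general
    {Ω α : Type*} [m0 : MeasurableSpace Ω]
    (P : Measure Ω)
    (Q : MeasurableSpace Ω)
    (M K : ℕ) (X : Fin M → Ω → α) (p : Fin K → α → ℝ)
    (SX : Fin M → Ω → ℝ) (c : Fin K → Ω → ℝ)
    -- the design variables are Q-measurable
    (hpQ : ∀ j m, StronglyMeasurable[Q] fun ω => p j (X m ω))
    -- integrability of targets, coefficients and their products with the design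
    (hSint : ∀ m, Integrable (SX m) P)
    (hcint : ∀ j, Integrable (c j) P)
    (hpSint : ∀ j m, Integrable (fun ω => p j (X m ω) * SX m ω) P)
    (hppcint : ∀ j j' j'' m,
      Integrable (fun ω => p j (X m ω) * p j' (X m ω) * c j'' ω) P)
    -- empirical normal equations for S*
    (hNE : ∀ j,
      (fun ω => ∑ m, p j (X m ω) *
          (SX m ω - ∑ j', c j' ω * p j' (X m ω))) =ᵐ[P] fun _ => (0 : ℝ)) :
    ∀ j,
      (fun ω => ∑ m, p j (X m ω) *
          ((P[SX m|Q]) ω - ∑ j', (P[c j'|Q]) ω * p j' (X m ω))) =ᵐ[P]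
        fun _ => (0 : ℝ) := by
  intro j
  set gram : Fin K → Ω → ℝ := fun j' ω => ∑ m, p j (X m ω) * p j' (X m ω) with hgram_def
  have hgram : ∀ j', StronglyMeasurable[Q] (gram j') := fun j' =>
    Finset.stronglyMeasurable_fun_sum _ fun m _ => (hpQ j m).mul (hpQ j' m)
  have hgram_c : ∀ j', Integrable (fun ω => gram j' ω * c j' ω) P := fun j' => by
    simpa only [hgram_def, sum_mul] using
      integrable_finsetSum univ fun m _ => hppcint j j' j' m
  have hresidual : ∀ (y : Fin M → Ω → ℝ) (x : Fin K → Ω → ℝ),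
      (fun ω => ∑ m, p j (X m ω) * (y m ω - ∑ j', x j' ω * p j' (X m ω))) =
        (fun ω => ∑ m, p j (X m ω) * y m ω) - fun ω => ∑ j', gram j' ω * x j' ω := fun y x => by
    funext ω
    simpa using sum_mul_sub_sum_mul_eq_sub_sum_gram_mul univ univ
      (fun m => p j (X m ω)) (fun m => y m ω) (fun j' m => p j' (X m ω)) (fun j' => x j' ω)
  have hcondExp_residual :
      P[(fun ω => ∑ m, p j (X m ω) * SX m ω) - fun ω => ∑ j', gram j' ω * c j' ω | Q] =ᵐ[P]
        (fun ω => ∑ m, p j (X m ω) * P[SX m | Q] ω) - fun ω => ∑ j', gram j' ω * P[c j' | Q] ω :=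
    (condExp_sub (integrable_finsetSum univ fun m _ => hpSint j m)
        (integrable_finsetSum univ fun j' _ => hgram_c j') Q).trans
      ((condExp_sum_mul_of_stronglyMeasurable univ (fun m _ => hpQ j m) (fun m _ => hSint m)
          fun m _ => hpSint j m).sub
        (condExp_sum_mul_of_stronglyMeasurable univ (fun j' _ => hgram j')
          (fun j' _ => hcint j') fun j' _ => hgram_c j'))
  rw [hresidual]
  refine hcondExp_residual.symm.trans ?_
  rw [← hresidual]
  simpa only [← Pi.zero_def, condExp_zero] using condExp_congr_ae (m := Q) (hNE j)

/-- Least-squares regression commutes with conditional expectation: if the design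
variables `p_j(X_m)` are `Q`-measurable and `S*` (with coefficients `c`) satisfies
the empirical normal equations for the targets `S(X_m)`, then the function with
coefficients `E[c_j | Q]` satisfies the normal equations for the targets
`E[S(X_m) | Q]`. -/
theorem ols_commutes_with_condexp
    {Ω α : Type*} [m0 : MeasurableSpace Ω]
    (P : Measure Ω) [IsProbabilityMeasure P]
    (Q : MeasurableSpace Ω) (hQ : Q ≤ m0)
    (M K : ℕ) (X : Fin M → Ω → α) (p : Fin K → α → ℝ)
    (SX : Fin M → Ω → ℝ) (c : Fin K → Ω → ℝ)
    -- the design variables are Q-measurable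
    (hpQ : ∀ j m, StronglyMeasurable[Q] fun ω => p j (X m ω))
    -- integrability of targets, coefficients and their products with the design
    (hSint : ∀ m, Integrable (SX m) P)
    (hcint : ∀ j, Integrable (c j) P)
    (hpSint : ∀ j m, Integrable (fun ω => p j (X m ω) * SX m ω) P)
    (hppcint : ∀ j j' j'' m,
      Integrable (fun ω => p j (X m ω) * p j' (X m ω) * c j'' ω) P)
    -- empirical normal equations for S*
    (hNE : ∀ j,
      (fun ω => ∑ m, p j (X m ω) *
          (SX m ω - ∑ j', c j' ω * p j' (X m ω))) =ᵐ[P] fun _ => (0 : ℝ)) :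
    ∀ j,
      (fun ω => ∑ m, p j (X m ω) *
          ((P[SX m|Q]) ω - ∑ j', (P[c j'|Q]) ω * p j' (X m ω))) =ᵐ[P]
        fun _ => (0 : ℝ) :=
  ols_commutes_with_condexp_general (m0 := m0) P Q M K X p SX c hpQ hSint hcint hpSint hppcint hNE
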